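/- The critical value of the spherical pendulum equals 1: the function u₊: S^n → ℝ defined by u₊(x) = ∫_{x_{n+1}}^1 √((2−2s)/(1−s²)) ds satisfies u₊ ≺ L+1, and conversely, if some function u: S^n → ℝ satisfies u ≺ L+c for some c ∈ ℝ, then c ≥ 1. In particular inf{ c ∈ ℝ : there exists u: S^n → ℝ with u ≺ L+c } = 1. -/

import Mathlib

/-!
Resting at the north pole, where the potential `-x_{n+1}` is minimal, costs action `-1` per unit
time, so `u ≺ L + c` forces `c ≥ 1`.

Conversely `u₊(x) = 4 - 2√2 √(1 + r)` with `r = x_{n+1}`. For `v` tangent at `x` one has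
`|v_{n+1}| ≤ ‖v‖ √(1 - r²)`, hence `du₊(v) ≤ √2 ‖v‖ √(1 - r) ≤ ‖v‖²/2 + 1 - r = L(x, v) + 1`
by AM–GM, and integrating along the `C¹` pieces of a curve gives `u₊ ≺ L + 1`. As `u₊` is not
differentiable at the south pole, this is done for `4 - 2√2 √(1 + r + ε)` and then `ε → 0`.
-/

open Set

noncomputable section

namespace SphericalPendulum

variable (n : ℕ)

/-- The ambient Euclidean space `ℝ^{n+1}`. -/
abbrev Amb := EuclideanSpace ℝ (Fin (n + 1))

/-- The unit sphere `S^n ⊂ ℝ^{n+1}`. -/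
abbrev Sph := Metric.sphere (0 : Amb n) 1

/-- The last coordinate `x_{n+1}` of a point of `ℝ^{n+1}`. -/
def lastCoord (x : Amb n) : ℝ := x (Fin.last n)

/-- The spherical-pendulum Lagrangian `L(x,v) = ½‖v‖² − x_{n+1}`. -/
def Lsph (x v : Amb n) : ℝ := ‖v‖ ^ 2 / 2 - lastCoord n x

/-- Velocity of a curve in the sphere, computed in the ambient space. -/
def sVel (γ : ℝ → Sph n) (s : ℝ) : Amb n := deriv (fun t : ℝ => (γ t : Amb n)) s

/-- Piecewise `C¹` curve `γ : [a,b] → S^n`. -/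
def sPiecewiseC1On (γ : ℝ → Sph n) (a b : ℝ) : Prop :=
  ContinuousOn (fun t : ℝ => (γ t : Amb n)) (Icc a b) ∧
    ∃ (k : ℕ) (t : Fin (k + 1) → ℝ), StrictMono t ∧ t 0 = a ∧ t (Fin.last k) = b ∧
      ∀ i : Fin k, ContDiffOn ℝ 1 (fun s : ℝ => (γ s : Amb n))
        (Icc (t i.castSucc) (t i.succ))

/-- The action `A_L(γ) = ∫_a^b L(γ(s), γ̇(s)) ds` of a curve `γ : [a,b] → S^n`. -/
def sAction (γ : ℝ → Sph n) (a b : ℝ) : ℝ :=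
  ∫ s in a..b, Lsph n (γ s : Amb n) (sVel n γ s)

/-- `u ≺ L + c` : `u` is dominated by `L + c`. -/
def sDominated (c : ℝ) (u : Sph n → ℝ) : Prop :=
  ∀ (γ : ℝ → Sph n) (a b : ℝ), a ≤ b → sPiecewiseC1On n γ a b →
    u (γ b) - u (γ a) ≤ sAction n γ a b + c * (b - a)

/-- The weak KAM solution `u₊(x) = ∫_{x_{n+1}}^1 √((2−2s)/(1−s²)) ds`. -/
def uPlus (x : Sph n) : ℝ :=
  ∫ s in (lastCoord n (x : Amb n))..1, Real.sqrt ((2 - 2 * s) / (1 - s ^ 2))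

/-- Backward weak KAM solution for the value `c`, for the spherical pendulum. -/
def sBackwardWeakKAM (c : ℝ) (u : Sph n → ℝ) : Prop :=
  sDominated n c u ∧
    ∀ x : Sph n, ∃ γ : ℝ → Sph n, γ 0 = x ∧
      ContDiffOn ℝ 1 (fun s : ℝ => (γ s : Amb n)) (Iic 0) ∧
      ∀ t : ℝ, 0 ≤ t → u x - u (γ (-t)) = sAction n γ (-t) 0 + c * t

/-- The north pole `N = (0,…,0,1) ∈ S^n`. -/
def northPole : Sph n :=
  ⟨EuclideanSpace.single (Fin.last n) (1 : ℝ), by simp⟩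

open MeasureTheory Filter Topology intervalIntegral
open scoped InnerProductSpace

theorem _root_.inner_eq_zero_of_hasDerivAt_of_norm_eq {E : Type*} [NormedAddCommGroup E]
    [InnerProductSpace ℝ E] {f : ℝ → E} {v : E} {t R : ℝ} (hf : HasDerivAt f v t)
    (hnorm : ∀ s, ‖f s‖ = R) : ⟪f t, v⟫_ℝ = 0 := by
  have h := hf.norm_sq
  simp only [hnorm] at h
  linarith [h.unique (hasDerivAt_const t (R ^ 2))]

theorem _root_.abs_inner_le_norm_mul_sqrt_of_inner_eq_zero {E : Type*} [NormedAddCommGroup E]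
    [InnerProductSpace ℝ E] {e x v : E} (he : ‖e‖ = 1) (hx : ‖x‖ = 1) (hxv : ⟪x, v⟫_ℝ = 0) :
    |⟪e, v⟫_ℝ| ≤ ‖v‖ * √(1 - ⟪e, x⟫_ℝ ^ 2) := by
  set p := e - ⟪e, x⟫_ℝ • x
  have hinner : ⟪e, v⟫_ℝ = ⟪p, v⟫_ℝ := by
    rw [inner_sub_left, real_inner_smul_left, hxv, mul_zero, sub_zero]
  have hnorm : ‖p‖ = √(1 - ⟪e, x⟫_ℝ ^ 2) := by
    rw [← Real.sqrt_sq (norm_nonneg p), norm_sub_sq_real, real_inner_smul_right, norm_smul,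
      he, hx, Real.norm_eq_abs, mul_one, sq_abs]
    ring_nf
  calc |⟪e, v⟫_ℝ| = |⟪p, v⟫_ℝ| := by rw [hinner]
    _ ≤ ‖p‖ * ‖v‖ := abs_real_inner_le_norm p v
    _ = ‖v‖ * √(1 - ⟪e, x⟫_ℝ ^ 2) := by rw [hnorm, mul_comm]

theorem _root_.sub_le_integral_of_adjacent_intervals {φ U : ℝ → ℝ} :
    ∀ {k : ℕ} (t : Fin (k + 1) → ℝ),
      (∀ i : Fin k, IntervalIntegrable φ volume (t i.castSucc) (t i.succ) ∧
        U (t i.succ) - U (t i.castSucc) ≤ ∫ s in t i.castSucc..t i.succ, φ s) →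
      IntervalIntegrable φ volume (t 0) (t (Fin.last k)) ∧
        U (t (Fin.last k)) - U (t 0) ≤ ∫ s in t 0..t (Fin.last k), φ s
  | 0, t, _ => by simp
  | k + 1, t, h => by
    obtain ⟨hint, hle⟩ := sub_le_integral_of_adjacent_intervals (fun i => t i.castSucc)
      fun i => by simpa only [Fin.succ_castSucc] using h i.castSucc
    obtain ⟨hint', hle'⟩ := h (Fin.last k)
    simp only [Fin.castSucc_zero, Fin.succ_last] at hint hle hint' hle'
    refine ⟨hint.trans hint', ?_⟩
    rw [← intervalIntegral.integral_add_adjacent_intervals hint hint']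
    linarith

theorem lastCoord_eq_inner (x : Amb n) : lastCoord n x = ⟪(northPole n : Amb n), x⟫_ℝ := by
  simp [lastCoord, northPole, EuclideanSpace.inner_single_left]

@[fun_prop]
theorem continuous_lastCoord : Continuous (lastCoord n) :=
  (EuclideanSpace.proj (𝕜 := ℝ) (Fin.last n)).continuous

theorem lastCoord_mem_Icc (x : Sph n) : lastCoord n x ∈ Icc (-1) 1 := by
  rw [lastCoord_eq_inner, mem_Icc, ← abs_le]
  simpa using abs_real_inner_le_norm (northPole n : Amb n) (x : Amb n)

theorem integral_sqrt_two_sub_two_mul_div_one_sub_sq {r : ℝ} (hr : r ∈ Icc (-1) 1) :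
    ∫ s in r..1, √((2 - 2 * s) / (1 - s ^ 2)) = 4 - 2 * √2 * √(1 + r) := by
  have hcont : ContinuousOn (fun s => 2 * √2 * √(1 + s)) (Icc r 1) := by fun_prop
  have hderiv : ∀ s ∈ Ioo r 1,
      HasDerivAt (fun s => 2 * √2 * √(1 + s)) (√((2 - 2 * s) / (1 - s ^ 2))) s := by
    intro s ⟨hrs, hs1⟩
    have hpos : 0 < 1 + s := by linarith [hr.1]
    have hquot : (2 - 2 * s) / (1 - s ^ 2) = 2 / (1 + s) := by
      rw [div_eq_div_iff (by nlinarith) hpos.ne']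
      ring
    refine (((Real.hasDerivAt_sqrt hpos.ne').comp s ((hasDerivAt_id s).const_add 1)).const_mul
      (2 * √2)).congr_deriv ?_
    rw [hquot, Real.sqrt_div' 2 hpos.le]
    field_simp
  have hint : IntervalIntegrable (fun s => √((2 - 2 * s) / (1 - s ^ 2))) volume r 1 :=
    (intervalIntegrable_iff_integrableOn_Ioc_of_le hr.2).2
      (integrableOn_deriv_of_nonneg hcont hderiv fun _ _ => Real.sqrt_nonneg _)
  rw [integral_eq_sub_of_hasDerivAt_of_le hr.2 hcont hderiv hint, one_add_one_eq_two, mul_assoc,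
    Real.mul_self_sqrt zero_le_two]
  ring

theorem uPlus_eq (x : Sph n) : uPlus n x = 4 - 2 * √2 * √(1 + lastCoord n x) :=
  integral_sqrt_two_sub_two_mul_div_one_sub_sq (lastCoord_mem_Icc n x)

def uPlusReg (ε : ℝ) (x : Sph n) : ℝ := 4 - 2 * √2 * √(1 + lastCoord n x + ε)

theorem tendsto_uPlusReg (x : Sph n) :
    Tendsto (fun ε => uPlusReg n ε x) (𝓝[>] 0) (𝓝 (uPlus n x)) := by
  rw [uPlus_eq]
  refine tendsto_nhdsWithin_of_tendsto_nhds ?_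
  have : Continuous fun ε => uPlusReg n ε x := by unfold uPlusReg; fun_prop
  simpa [uPlusReg] using this.tendsto 0

theorem hasDerivAt_uPlusReg {ε : ℝ} (hε : 0 < ε) {γ : ℝ → Sph n} {t : ℝ} {v : Amb n}
    (hγ : HasDerivAt (fun s => (γ s : Amb n)) v t) :
    HasDerivAt (fun s => uPlusReg n ε (γ s))
      (-(√2 * lastCoord n v) / √(1 + lastCoord n (γ t) + ε)) t := by
  have hlast : HasDerivAt (fun s => 1 + lastCoord n (γ s) + ε) (lastCoord n v) t :=
    (((EuclideanSpace.proj (𝕜 := ℝ) (Fin.last n)).hasFDerivAt.comp_hasDerivAt t hγ).const_add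
      1).add_const ε
  have hpos : 0 < 1 + lastCoord n (γ t) + ε := by linarith [(lastCoord_mem_Icc n (γ t)).1]
  refine (((Real.hasDerivAt_sqrt hpos.ne').comp t hlast).const_mul (2 * √2)).const_sub 4
    |>.congr_deriv ?_
  field_simp

theorem uPlusReg_deriv_le {ε : ℝ} (hε : 0 < ε) (x : Sph n) {v : Amb n}
    (hxv : ⟪(x : Amb n), v⟫_ℝ = 0) :
    -(√2 * lastCoord n v) / √(1 + lastCoord n x + ε) ≤ Lsph n x v + 1 := by
  have hcoord : |lastCoord n v| ≤ ‖v‖ * (√(1 - lastCoord n x) * √(1 + lastCoord n x)) := by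
    rw [← Real.sqrt_mul (by linarith [(lastCoord_mem_Icc n x).2]), lastCoord_eq_inner,
      lastCoord_eq_inner]
    convert abs_inner_le_norm_mul_sqrt_of_inner_eq_zero (norm_eq_of_mem_sphere (northPole n))
      (norm_eq_of_mem_sphere x) hxv using 3
    ring
  obtain ⟨hr₁, hr₂⟩ := lastCoord_mem_Icc n x
  set r := lastCoord n x
  have hroot : √(1 + r) ≤ √(1 + r + ε) := Real.sqrt_le_sqrt (by linarith)
  have hamgm : √2 * (‖v‖ * √(1 - r)) ≤ ‖v‖ ^ 2 / 2 + (1 - r) := by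
    nlinarith [sq_nonneg (‖v‖ - √2 * √(1 - r)), Real.sq_sqrt (show (0 : ℝ) ≤ 1 - r by linarith),
      Real.sq_sqrt (show (0 : ℝ) ≤ 2 by norm_num)]
  rw [div_le_iff₀ (Real.sqrt_pos.2 (by linarith)), Lsph]
  calc -(√2 * lastCoord n v) ≤ √2 * |lastCoord n v| := by
        nlinarith [neg_abs_le (lastCoord n v), Real.sqrt_nonneg 2]
    _ ≤ √2 * (‖v‖ * √(1 - r)) * √(1 + r) := by
        rw [mul_assoc, mul_assoc ‖v‖]; gcongr
    _ ≤ √2 * (‖v‖ * √(1 - r)) * √(1 + r + ε) := by gcongr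
    _ ≤ (‖v‖ ^ 2 / 2 - r + 1) * √(1 + r + ε) := by gcongr; linarith

theorem sDominated_of_tendsto {ι : Type*} {l : Filter ι} [l.NeBot] {c : ℝ} {u : Sph n → ℝ}
    {v : ι → Sph n → ℝ} (hv : ∀ᶠ i in l, sDominated n c (v i))
    (hlim : ∀ x, Tendsto (fun i => v i x) l (𝓝 (u x))) : sDominated n c u :=
  fun γ a b hab hγ => le_of_tendsto ((hlim _).sub (hlim _)) (hv.mono fun _ hi => hi γ a b hab hγ)

theorem sDominated_of_forall_contDiffOn {c : ℝ} {u : Sph n → ℝ}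
    (h : ∀ (γ : ℝ → Sph n) (a b : ℝ), a < b →
      ContDiffOn ℝ 1 (fun s => (γ s : Amb n)) (Icc a b) →
      IntervalIntegrable (fun s => Lsph n (γ s) (sVel n γ s)) volume a b ∧
        u (γ b) - u (γ a) ≤ sAction n γ a b + c * (b - a)) :
    sDominated n c u := by
  rintro γ a b - ⟨-, k, t, ht, rfl, rfl, hC1⟩
  have := (sub_le_integral_of_adjacent_intervals (φ := fun s => Lsph n (γ s) (sVel n γ s))
    (U := fun s => u (γ s) - c * s) t fun i => ?_).2
  · unfold sAction
    linarith
  · obtain ⟨hint, hle⟩ := h γ _ _ (ht i.castSucc_lt_succ) (hC1 i)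
    exact ⟨hint, by unfold sAction at hle; linarith⟩

theorem sDominated_of_hasDerivAt_le {c : ℝ} {u : Sph n → ℝ} (hu : Continuous u)
    (du : Sph n → Amb n → ℝ)
    (hdu : ∀ (γ : ℝ → Sph n) (t : ℝ) (v : Amb n), HasDerivAt (fun s => (γ s : Amb n)) v t →
      HasDerivAt (fun s => u (γ s)) (du (γ t) v) t)
    (hle : ∀ (x : Sph n) (v : Amb n), ⟪(x : Amb n), v⟫_ℝ = 0 → du x v ≤ Lsph n x v + c) :
    sDominated n c u := by
  refine sDominated_of_forall_contDiffOn n fun γ a b hab hC1 => ?_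
  set Γ := fun s => (γ s : Amb n)
  have hvel : ∀ t ∈ Ioo a b, HasDerivAt Γ (sVel n γ t) t := fun t ht =>
    ((hC1.differentiableOn one_ne_zero t (Ioo_subset_Icc_self ht)).differentiableAt
      (Icc_mem_nhds ht.1 ht.2)).hasDerivAt
  have hL : IntegrableOn (fun s => Lsph n (γ s) (sVel n γ s)) (Icc a b) := by
    have hcont : ContinuousOn (fun s => Lsph n (γ s) (derivWithin Γ (Icc a b) s)) (Icc a b) := by
      have hW := hC1.continuousOn_derivWithin (uniqueDiffOn_Icc hab) le_rfl
      exact ((hW.norm.pow 2).div_const 2).sub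
        ((continuous_lastCoord n).comp_continuousOn hC1.continuousOn)
    rw [integrableOn_Icc_iff_integrableOn_Ioo]
    refine (hcont.integrableOn_Icc.mono_set Ioo_subset_Icc_self).congr_fun (fun t ht => ?_)
      measurableSet_Ioo
    dsimp only
    rw [derivWithin_of_mem_nhds (Icc_mem_nhds ht.1 ht.2)]
    rfl
  have hcont : ContinuousOn (fun s => u (γ s)) (Icc a b) :=
    hu.comp_continuousOn (Topology.IsInducing.subtypeVal.continuousOn_iff.2 hC1.continuousOn)
  have hint : IntervalIntegrable (fun s => Lsph n (γ s) (sVel n γ s)) volume a b :=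
    (intervalIntegrable_iff_integrableOn_Icc_of_le hab.le).2 hL
  refine ⟨hint, ?_⟩
  have := sub_le_integral_of_hasDeriv_right_of_le hab.le hcont
    (fun t ht => (hdu γ t _ (hvel t ht)).hasDerivWithinAt)
    (hL.add (integrableOn_const measure_Icc_lt_top.ne))
    (fun t ht => hle _ _ (inner_eq_zero_of_hasDerivAt_of_norm_eq (hvel t ht)
      fun s => norm_eq_of_mem_sphere (γ s)))
  simp only [Pi.add_apply] at this
  rwa [integral_add hint intervalIntegrable_const, intervalIntegral.integral_const, smul_eq_mul,
    mul_comm (b - a)] at this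

theorem uPlusReg_sDominated {ε : ℝ} (hε : 0 < ε) : sDominated n 1 (uPlusReg n ε) :=
  sDominated_of_hasDerivAt_le n (by unfold uPlusReg; fun_prop)
    (fun x v => -(√2 * lastCoord n v) / √(1 + lastCoord n x + ε))
    (fun _ _ _ hγ => hasDerivAt_uPlusReg n hε hγ) (fun x _ hxv => uPlusReg_deriv_le n hε x hxv)

theorem uPlus_sDominated : sDominated n 1 (uPlus n) :=
  sDominated_of_tendsto n (l := 𝓝[>] 0)
    (eventually_nhdsWithin_of_forall fun _ hε => uPlusReg_sDominated n hε) (tendsto_uPlusReg n)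

theorem sPiecewiseC1On_const (x : Sph n) {a b : ℝ} (hab : a < b) :
    sPiecewiseC1On n (fun _ => x) a b :=
  ⟨continuousOn_const, 1, ![a, b], by simpa [Fin.strictMono_iff_lt_succ] using hab, rfl, rfl,
    fun _ => contDiffOn_const⟩

theorem sAction_const (x : Sph n) (a b : ℝ) :
    sAction n (fun _ => x) a b = -((b - a) * lastCoord n x) := by
  simp [sAction, sVel, Lsph]

theorem one_le_of_sDominated {c : ℝ} {u : Sph n → ℝ} (hu : sDominated n c u) : 1 ≤ c := by
  have h := hu (fun _ => northPole n) 0 1 zero_le_one (sPiecewiseC1On_const n _ zero_lt_one)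
  have hN : lastCoord n (northPole n) = 1 := by simp [lastCoord, northPole]
  rw [sAction_const, hN] at h
  linarith

theorem critical_value_of_spherical_pendulum :
    sDominated n 1 (uPlus n) ∧
      (∀ (c : ℝ) (u : Sph n → ℝ), sDominated n c u → 1 ≤ c) ∧
      sInf {c : ℝ | ∃ u : Sph n → ℝ, sDominated n c u} = 1 := by
  have hleast : IsLeast {c : ℝ | ∃ u : Sph n → ℝ, sDominated n c u} 1 :=
    ⟨⟨uPlus n, uPlus_sDominated n⟩, fun _ ⟨_, hu⟩ => one_le_of_sDominated n hu⟩
  exact ⟨uPlus_sDominated n, fun _ _ => one_le_of_sDominated n, hleast.csInf_eq⟩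

end SphericalPendulum
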